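/- With M a finitely generated W_n(k)-module and Φ : M → M a σ-linear endomorphism as above, the canonical W_n(k)-linear map M^{Φ=1} ⊗_{Z/p^n} W_n(k) → M (sending m ⊗ λ to λm) is injective. -/

import Mathlib

/-!
Write `W = W_n(k)` and `A = ℤ/pⁿ`. Since `k` is algebraically closed, `σ - 1` is surjective
on `W` (solve Artin–Schreier equations one Witt coordinate at a time) and its kernel is `A`, so
by right exactness of `⊗` the kernel of `(σ - 1) ⊗ 1` on `W ⊗_A M^{Φ=1}` consists of the
tensors `1 ⊗ m`. Given a relation `∑ lᵢ mᵢ = 0` with `mᵢ` fixed by `Φ`, write `lᵢ = pᵃ u cᵢ`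
with `u` a unit and `cᵢ₀ = 1`, and move `pᵃ ∈ A` across the tensor sign. Applying `Φ` and
subtracting gives a shorter relation with coefficients `σ cᵢ - cᵢ`; by induction its tensor
vanishes, so `∑ cᵢ ⊗ pᵃ mᵢ` is some `1 ⊗ m`, and then `m = ∑ cᵢ pᵃ mᵢ = 0`.
-/

open scoped TensorProduct

/-- An algebraic closure of the finite field `𝔽_q` with `q = p ^ d` elements. -/
abbrev FqBar (p d : ℕ) [Fact p.Prime] : Type :=
  AlgebraicClosure (GaloisField p d)

/-- The Frobenius `σ` of the truncated Witt vectors `W_n(R)` of a ring `R` of characteristic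
`p`, induced by the `p`-th power map on `R`: it acts coefficientwise by `x ↦ x ^ p`. -/
noncomputable def truncatedWittFrobenius (p n : ℕ) [Fact p.Prime] (R : Type*) [CommRing R] :
    TruncatedWittVector p n R → TruncatedWittVector p n R :=
  fun x => TruncatedWittVector.mk p fun i => x.coeff i ^ p

/-- The subgroup of fixed points of an additive endomorphism `Φ` (i.e. `M^{Φ=1}`). -/
def AddMonoidHom.fixedSubgroup {M : Type*} [AddCommGroup M] (Φ : M →+ M) : AddSubgroup M where
  carrier := {x | Φ x = x}
  zero_mem' := map_zero Φ
  add_mem' := fun {a b} ha hb => by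
    simp only [Set.mem_setOf_eq] at *; rw [map_add, ha, hb]
  neg_mem' := fun {a} ha => by
    simp only [Set.mem_setOf_eq] at *; rw [map_neg, ha]

/-- `p ^ n = 0` in the length-`n` truncated Witt vectors of a ring of characteristic `p`. -/
lemma TruncatedWittVector.p_pow_natCast_eq_zero (p n : ℕ) [hp : Fact p.Prime]
    (R : Type*) [CommRing R] [CharP R p] :
    ((p ^ n : ℕ) : TruncatedWittVector p n R) = 0 := by
  push_cast
  have h : (p : TruncatedWittVector p n R) ^ n =
      WittVector.truncate n ((p : WittVector p R) ^ n) := by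
    rw [RingHom.map_pow, map_natCast]
  rw [h]
  apply TruncatedWittVector.ext
  intro i
  rw [WittVector.coeff_truncate, TruncatedWittVector.coeff_zero,
    WittVector.coeff_p_pow_eq_zero]
  exact i.2.ne

open Polynomial in
theorem IsAlgClosed.exists_pow_sub_self_eq {K : Type*} [Field K] [IsAlgClosed K] {p : ℕ}
    (hp : 1 < p) (γ : K) : ∃ c : K, c ^ p - c = γ := by
  have hX : (X : K[X]).degree < (X ^ p : K[X]).degree := by
    rw [degree_X, degree_X_pow]; exact_mod_cast hp
  have hdeg : (X ^ p - X - C γ : K[X]).degree = p := by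
    rw [degree_sub_C, degree_sub_eq_left_of_degree_lt hX, degree_X_pow]
    rw [degree_sub_eq_left_of_degree_lt hX, degree_X_pow]; exact_mod_cast (by omega : 0 < p)
  obtain ⟨c, hc⟩ := IsAlgClosed.exists_root (X ^ p - X - C γ : K[X])
    (by rw [hdeg]; exact_mod_cast (by omega : p ≠ 0))
  exact ⟨c, by simpa [sub_eq_zero] using hc⟩

namespace TruncatedWittVector

variable {p : ℕ} [Fact p.Prime]

section map

variable {n : ℕ} {R S : Type*} [CommRing R] [CommRing S]

noncomputable def map (f : R →+* S) : TruncatedWittVector p n R →+* TruncatedWittVector p n S :=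
  (WittVector.truncate n).liftOfSurjective (WittVector.truncate_surjective p n R)
    ⟨(WittVector.truncate n).comp (WittVector.map f), fun x hx => by
      rw [WittVector.mem_ker_truncate] at hx
      rw [RingHom.mem_ker, RingHom.comp_apply, ← RingHom.mem_ker, WittVector.mem_ker_truncate]
      intro i hi
      rw [WittVector.map_coeff, hx i hi, map_zero]⟩

theorem map_truncate (f : R →+* S) (x : WittVector p R) :
    map f (WittVector.truncate n x) = WittVector.truncate n (WittVector.map f x) :=
  RingHom.liftOfRightInverse_comp_apply _ _ _ _ x

@[simp]
theorem coeff_map (f : R →+* S) (x : TruncatedWittVector p n R) (i : Fin n) :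
    (map f x).coeff i = f (x.coeff i) := by
  obtain ⟨y, rfl⟩ := WittVector.truncate_surjective p n R x
  rw [map_truncate, WittVector.coeff_truncate, WittVector.coeff_truncate, WittVector.map_coeff]

theorem truncate_map {m : ℕ} (h : n ≤ m) (f : R →+* S) (x : TruncatedWittVector p m R) :
    truncate h (map f x) = map f (truncate h x) :=
  ext fun i => by simp only [coeff_truncate, coeff_map]

end map

theorem _root_.truncatedWittFrobenius_eq_map {n : ℕ} (R : Type*) [CommRing R] [CharP R p] :
    truncatedWittFrobenius p n R = map (frobenius R p) :=
  funext fun x => ext fun i => by rw [coeff_map, truncatedWittFrobenius, coeff_mk, frobenius_def]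

section fixedPoints

variable {n : ℕ} {K : Type*} [Field K] [CharP K p]
  [Algebra (ZMod (p ^ n)) (TruncatedWittVector p n K)]

theorem map_frobenius_eq_self_iff (x : TruncatedWittVector p n K) :
    map (frobenius K p) x = x ↔ x ∈ Set.range (algebraMap (ZMod (p ^ n)) _) := by
  constructor
  · intro hx
    have hcoeff (i : Fin n) : x.coeff i ∈ (ZMod.castHom dvd_rfl K).fieldRange := by
      rw [ZMod.fieldRange_castHom_eq_bot, Subfield.mem_bot_iff_pow_eq_self, ← frobenius_def,
        ← coeff_map, hx]
    choose z hz using hcoeff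
    refine ⟨(zmodEquivTrunc p n).symm (mk p z), ?_⟩
    rw [RingHom.ext_zmod (algebraMap _ _) ((map (ZMod.castHom dvd_rfl K)).comp
      (zmodEquivTrunc p n : ZMod (p ^ n) →+* TruncatedWittVector p n (ZMod p)))]
    exact ext fun i => by simp [hz]
  · rintro ⟨a, rfl⟩
    exact RingHom.congr_fun (RingHom.ext_zmod ((map (frobenius K p)).comp (algebraMap _ _)) _) a

noncomputable def frobeniusAlgHom :
    TruncatedWittVector p n K →ₐ[ZMod (p ^ n)] TruncatedWittVector p n K :=
  { map (frobenius K p) with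
    commutes' := fun _ => (map_frobenius_eq_self_iff _).mpr ⟨_, rfl⟩ }

theorem exact_algebraMap_frobeniusAlgHom_sub_one :
    Function.Exact (Algebra.linearMap (ZMod (p ^ n)) (TruncatedWittVector p n K))
      (frobeniusAlgHom.toLinearMap - 1 : Module.End (ZMod (p ^ n)) (TruncatedWittVector p n K)) :=
  fun x => by
    rw [LinearMap.sub_apply, Module.End.one_apply, sub_eq_zero]
    exact map_frobenius_eq_self_iff x

end fixedPoints

section surjectivity

variable {R : Type*} [CommRing R]

theorem coeff_truncate_iterate_verschiebung (n : ℕ) (x : WittVector p R) (i : Fin (n + 1)) :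
    (WittVector.truncate (n + 1) (WittVector.verschiebung^[n] x)).coeff i =
      if (i : ℕ) = n then x.coeff 0 else 0 := by
  rw [WittVector.coeff_truncate]
  split_ifs with h
  · simpa [h] using WittVector.iterate_verschiebung_coeff x n 0
  · exact WittVector.iterate_verschiebung_coeff_eq_zero x (by omega)

noncomputable def ofLast (n : ℕ) : R →+ TruncatedWittVector p (n + 1) R where
  toFun c := WittVector.truncate (n + 1) (WittVector.verschiebung^[n] (WittVector.teichmuller p c))
  map_zero' := ext fun i => by simp
  map_add' a b := ext fun i => by
    rw [← map_add, ← iterate_map_add, coeff_truncate_iterate_verschiebung,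
      coeff_truncate_iterate_verschiebung, WittVector.add_coeff_zero]
    simp [WittVector.teichmuller_coeff_zero]

theorem coeff_ofLast (n : ℕ) (c : R) (i : Fin (n + 1)) :
    (ofLast n c : TruncatedWittVector p (n + 1) R).coeff i = if (i : ℕ) = n then c else 0 := by
  rw [ofLast, AddMonoidHom.coe_mk, ZeroHom.coe_mk, coeff_truncate_iterate_verschiebung,
    WittVector.teichmuller_coeff_zero]

theorem map_ofLast {S : Type*} [CommRing S] (f : R →+* S) (n : ℕ) (c : R) :
    map f (ofLast n c : TruncatedWittVector p (n + 1) R) = ofLast n (f c) :=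
  ext fun i => by simp only [coeff_map, coeff_ofLast, apply_ite f, map_zero]

theorem eq_ofLast_of_truncate_eq_zero {n : ℕ} {x : TruncatedWittVector p (n + 1) R}
    (hx : truncate (Nat.le_succ n) x = 0) : x = ofLast n (x.coeff (Fin.last n)) :=
  ext fun i => by
    rw [coeff_ofLast]
    split_ifs with h
    · exact congrArg x.coeff (Fin.ext h)
    · have hi := congrArg (coeff ⟨i, by omega⟩) hx
      rwa [coeff_truncate, coeff_zero] at hi

theorem map_frobenius_sub_self_surjective (K : Type*) [Field K] [CharP K p] [IsAlgClosed K] :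
    ∀ n, Function.Surjective fun x : TruncatedWittVector p n K => map (frobenius K p) x - x
  | 0 => fun _ => ⟨0, ext fun i => i.elim0⟩
  | n + 1 => fun a => by
    obtain ⟨y, hy⟩ := map_frobenius_sub_self_surjective K n (truncate (Nat.le_succ n) a)
    obtain ⟨Y, rfl⟩ := truncate_surjective (Nat.le_succ n) y
    set e := a - (map (frobenius K p) Y - Y)
    have he : truncate (Nat.le_succ n) e = 0 := by
      rw [map_sub, map_sub, truncate_map, ← hy, sub_self]
    obtain ⟨c, hc⟩ := IsAlgClosed.exists_pow_sub_self_eq (Fact.out : p.Prime).one_lt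
      (e.coeff (Fin.last n))
    refine ⟨Y + ofLast n c, ?_⟩
    dsimp only
    rw [map_add, map_ofLast, frobenius_def, add_sub_add_comm, ← map_sub, hc,
      ← eq_ofLast_of_truncate_eq_zero he]
    exact add_sub_cancel _ _

end surjectivity

section normalization

variable {n : ℕ} {K : Type*} [Field K] [CharP K p] [PerfectRing K p]

theorem exists_eq_pow_p_mul_unit (x : TruncatedWittVector p n K) :
    ∃ (a : ℕ) (u : (TruncatedWittVector p n K)ˣ), x = (p : TruncatedWittVector p n K) ^ a * u := by
  obtain ⟨y, rfl⟩ := WittVector.truncate_surjective p n K x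
  rcases eq_or_ne y 0 with rfl | hy
  · refine ⟨n, 1, ?_⟩
    rw [map_zero, ← Nat.cast_pow, p_pow_natCast_eq_zero, zero_mul]
  · obtain ⟨a, u, rfl⟩ := WittVector.exists_eq_pow_p_mul' y hy
    exact ⟨a, Units.map (WittVector.truncate n).toMonoidHom u, by simp⟩

theorem exists_eq_pow_p_mul_unit_mul_of_finset {ι : Type*} {s : Finset ι} (hs : s.Nonempty)
    (l : ι → TruncatedWittVector p n K) :
    ∃ i₀ ∈ s, ∃ (a : ℕ) (u : (TruncatedWittVector p n K)ˣ) (c : ι → TruncatedWittVector p n K),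
      c i₀ = 1 ∧ ∀ i ∈ s, l i = (p : TruncatedWittVector p n K) ^ a * u * c i := by
  choose e v hv using fun i => exists_eq_pow_p_mul_unit (l i)
  obtain ⟨i₀, hi₀, hmin⟩ := s.exists_min_image e hs
  refine ⟨i₀, hi₀, e i₀, v i₀, fun i => (p : TruncatedWittVector p n K) ^ (e i - e i₀) * v i *
    ↑(v i₀)⁻¹, by simp, fun i hi => ?_⟩
  rw [hv i, ← Nat.add_sub_cancel' (hmin i hi), pow_add]
  linear_combination -(↑(v i) * (p : TruncatedWittVector p n K) ^ e i₀ * p ^ (e i - e i₀)) *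
    (v i₀).mul_inv

end normalization

end TruncatedWittVector

section Descent

open TensorProduct LinearMap

variable {A W F M : Type*} [CommRing A] [CommRing W] [Algebra A W]
  [AddCommGroup F] [Module A F] [AddCommGroup M] [Module W M] [Module A M] [IsScalarTower A W M]
  (ℓ : F →ₗ[A] M)

theorem LinearMap.liftBaseChange_rTensor_algebraMap (x : A ⊗[A] F) :
    ℓ.liftBaseChange W (rTensor F (Algebra.linearMap A W) x) = ℓ (TensorProduct.lid A F x) := by
  induction x with
  | zero => simp only [map_zero]
  | tmul a m => simp [algebraMap_smul]
  | add x y hx hy => simp only [map_add, hx, hy]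

theorem LinearMap.eq_zero_of_rTensor_eq_zero_of_liftBaseChange_eq_zero {P : Type*}
    [AddCommGroup P] [Module A P] {g : W →ₗ[A] P}
    (hexact : Function.Exact (Algebra.linearMap A W) g) (hg : Function.Surjective g)
    (hℓ : Function.Injective ℓ) {t : W ⊗[A] F} (ht : rTensor F g t = 0)
    (hμ : ℓ.liftBaseChange W t = 0) : t = 0 := by
  obtain ⟨x, rfl⟩ := (rTensor_exact F hexact hg t).mp ht
  rw [liftBaseChange_rTensor_algebraMap, ← ℓ.map_zero] at hμ
  rw [(TensorProduct.lid A F).map_eq_zero_iff.mp (hℓ hμ), map_zero]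

variable {ℓ} (σ : W →ₐ[A] W) {Φ : M →+ M} (hΦ : ∀ (c : W) (x : M), Φ (c • x) = σ c • Φ x)
  (hfix : ∀ m, Φ (ℓ m) = ℓ m)
  (hexact : Function.Exact (Algebra.linearMap A W) (σ.toLinearMap - 1 : Module.End A W))
  (hsurj : Function.Surjective (σ.toLinearMap - 1 : Module.End A W)) (hℓ : Function.Injective ℓ)
include hΦ hfix hexact hsurj hℓ

theorem sum_tmul_eq_zero_of_coeff_eq_one {ι : Type*} [DecidableEq ι] {s : Finset ι} {i₀ : ι}
    (l : ι → W) (m : ι → F) (hl : l i₀ = 1) (h : ∑ i ∈ s, l i • ℓ (m i) = 0)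
    (ih : ∑ i ∈ s.erase i₀, (σ (l i) - l i) • ℓ (m i) = 0 →
      ∑ i ∈ s.erase i₀, (σ (l i) - l i) ⊗ₜ[A] m i = 0) :
    ∑ i ∈ s, l i ⊗ₜ[A] m i = 0 := by
  have hl₀ : σ (l i₀) - l i₀ = 0 := by rw [hl, map_one, sub_self]
  have hσ : ∑ i ∈ s, σ (l i) • ℓ (m i) = 0 := by
    simpa only [map_sum, hΦ, hfix, map_zero] using congrArg Φ h
  refine ℓ.eq_zero_of_rTensor_eq_zero_of_liftBaseChange_eq_zero hexact hsurj hℓ ?_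
    (by simpa using h)
  simp only [map_sum, rTensor_tmul, LinearMap.sub_apply, AlgHom.toLinearMap_apply,
    Module.End.one_apply]
  rw [← Finset.sum_erase _ (by rw [hl₀, zero_tmul])]
  refine ih ?_
  rw [Finset.sum_erase _ (by rw [hl₀, zero_smul])]
  simp only [sub_smul, Finset.sum_sub_distrib, hσ, h, sub_zero]

end Descent

namespace TruncatedWittVector

open TensorProduct

variable {p : ℕ} [Fact p.Prime] {n : ℕ} {K : Type*} [Field K] [CharP K p] [IsAlgClosed K]
  [Algebra (ZMod (p ^ n)) (TruncatedWittVector p n K)]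
  {F M : Type*} [AddCommGroup F] [Module (ZMod (p ^ n)) F] [AddCommGroup M]
  [Module (TruncatedWittVector p n K) M] [Module (ZMod (p ^ n)) M]
  [IsScalarTower (ZMod (p ^ n)) (TruncatedWittVector p n K) M]
  {Φ : M →+ M}
  (hΦ : ∀ (c : TruncatedWittVector p n K) (x : M), Φ (c • x) = map (frobenius K p) c • Φ x)
  {ℓ : F →ₗ[ZMod (p ^ n)] M} (hℓ : Function.Injective ℓ) (hfix : ∀ m, Φ (ℓ m) = ℓ m)
include hΦ hℓ hfix

theorem sum_tmul_eq_zero_of_sum_smul_eq_zero {ι : Type*} [DecidableEq ι] (s : Finset ι)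
    (l : ι → TruncatedWittVector p n K) (m : ι → F) (h : ∑ i ∈ s, l i • ℓ (m i) = 0) :
    ∑ i ∈ s, l i ⊗ₜ[ZMod (p ^ n)] m i = 0 := by
  induction s using Finset.strongInduction generalizing l m with
  | H s ih =>
  rcases s.eq_empty_or_nonempty with rfl | hs
  · exact Finset.sum_empty
  obtain ⟨i₀, hi₀, a, u, c, hc, hl⟩ := exists_eq_pow_p_mul_unit_mul_of_finset hs l
  set q : ZMod (p ^ n) := (p : ZMod (p ^ n)) ^ a
  have hq : algebraMap (ZMod (p ^ n)) (TruncatedWittVector p n K) q = (p : _) ^ a := by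
    simp only [q, map_pow, map_natCast]
  have hsmul (i) (hi : i ∈ s) : l i • ℓ (m i) = u • c i • ℓ (q • m i) := by
    rw [hl i hi, map_smul, ← algebraMap_smul (TruncatedWittVector p n K) q, hq, Units.smul_def,
      smul_smul, smul_smul]
    ring_nf
  have htmul (i) (hi : i ∈ s) :
      l i ⊗ₜ[ZMod (p ^ n)] m i = u • (c i ⊗ₜ[ZMod (p ^ n)] (q • m i)) := by
    rw [← smul_tmul, Units.smul_def, smul_tmul', Algebra.smul_def q, hq, smul_eq_mul, hl i hi]
    ring_nf
  have hc_rel : ∑ i ∈ s, c i • ℓ (q • m i) = 0 := by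
    rw [Finset.sum_congr rfl hsmul, ← Finset.smul_sum] at h
    exact (smul_eq_zero_iff_eq u).mp h
  have hc_tmul := sum_tmul_eq_zero_of_coeff_eq_one frobeniusAlgHom hΦ hfix
    exact_algebraMap_frobeniusAlgHom_sub_one (map_frobenius_sub_self_surjective K n) hℓ c _ hc
    hc_rel (ih _ (Finset.erase_ssubset hi₀) _ _)
  rw [Finset.sum_congr rfl htmul, ← Finset.smul_sum, hc_tmul, smul_zero]

theorem liftBaseChange_injective :
    Function.Injective (ℓ.liftBaseChange (TruncatedWittVector p n K)) := by
  classical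
  refine (injective_iff_map_eq_zero _).mpr fun t ht => ?_
  obtain ⟨S, rfl⟩ := TensorProduct.exists_finset t
  refine sum_tmul_eq_zero_of_sum_smul_eq_zero hΦ hℓ hfix S Prod.fst Prod.snd ?_
  simpa [map_sum] using ht

end TruncatedWittVector

theorem fixedPoints_baseChange_injective
    (p d n : ℕ) [Fact p.Prime]
    (M : Type*) [AddCommGroup M] [Module (TruncatedWittVector p n (FqBar p d)) M]
    (Φ : M →+ M)
    (hΦ : ∀ (c : TruncatedWittVector p n (FqBar p d)) (x : M),
      Φ (c • x) = truncatedWittFrobenius p n (FqBar p d) c • Φ x) :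
    letI W := TruncatedWittVector p n (FqBar p d)
    letI : Algebra (ZMod (p ^ n)) W :=
      ZMod.algebra' W (ringChar W)
        (ringChar.dvd (TruncatedWittVector.p_pow_natCast_eq_zero p n (FqBar p d)))
    letI : Module (ZMod (p ^ n)) M := Module.compHom M (algebraMap (ZMod (p ^ n)) W)
    haveI : IsScalarTower (ZMod (p ^ n)) W M :=
      IsScalarTower.of_algebraMap_smul fun r x => rfl
    letI : Module (ZMod (p ^ n)) (Φ.fixedSubgroup) := AddCommGroup.zmodModule (by
      intro x
      apply Subtype.ext
      show (p ^ n) • (x : M) = 0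
      rw [← Nat.cast_smul_eq_nsmul W, TruncatedWittVector.p_pow_natCast_eq_zero p n,
        zero_smul])
    Function.Injective ((Φ.fixedSubgroup.subtype.toZModLinearMap (p ^ n)).liftBaseChange W) := by
  rw [truncatedWittFrobenius_eq_map] at hΦ
  -- the module structures of the statement are local, so unification has to supply them
  apply (config := { synthAssignedInstances := false }) TruncatedWittVector.liftBaseChange_injective
  exacts [hΦ, Subtype.val_injective, fun m => m.2]
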